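/- arXiv:2204.08520 — 4 statements merged into one kernel-verified Lean document; each statement's English description precedes it below -/
import Mathlib

section
/- Let A, B be unital C*-algebras with compatible 𝔄-actions, π: A → B(H) and σ: B → B(K) injective *-representations, and endow B(H), B(K) with the 𝔄-actions x·α = xπ(1·α), α·y = σ(α·1)y. Let I′ be the corresponding ideal of π(A) ⊙ σ(B). Then the induced *-homomorphism π ⊙_𝔄 σ: A ⊙_𝔄 B → (π(A) ⊙ σ(B))/I′ is injective. -/
open scoped TensorProduct
noncomputable section

/-- A compatible action of a C*-algebra `𝔄` on a C*-algebra `A` (Amini):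
bilinear, bounded, compatible with multiplication and star. -/
structure CompatibleAction (𝔄 A : Type*) [NonUnitalNormedRing 𝔄] [StarRing 𝔄]
    [NormedSpace ℂ 𝔄] [NonUnitalNormedRing A] [StarRing A] [NormedSpace ℂ A] where
  l : 𝔄 →ₗ[ℂ] A →ₗ[ℂ] A
  r : A →ₗ[ℂ] 𝔄 →ₗ[ℂ] A
  bound : ℝ
  bound_pos : 0 < bound
  norm_l : ∀ α a, ‖l α a‖ ≤ bound * ‖a‖ * ‖α‖
  norm_r : ∀ a α, ‖r a α‖ ≤ bound * ‖a‖ * ‖α‖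
  l_mul : ∀ α a b, l α (a * b) = (l α a) * b
  mul_r : ∀ a b α, r (a * b) α = a * (r b α)
  star_l : ∀ α a, star (l α a) = r (star a) (star α)
  star_r : ∀ a α, star (r a α) = l (star α) (star a)

/-- The action is commutative: `α • a = a • α`. -/
def CompatibleAction.IsCommutative {𝔄 A : Type*} [NonUnitalNormedRing 𝔄] [StarRing 𝔄]
    [NormedSpace ℂ 𝔄] [NonUnitalNormedRing A] [StarRing A] [NormedSpace ℂ A]
    (act : CompatibleAction 𝔄 A) : Prop :=
  ∀ (α : 𝔄) (a : A), act.l α a = act.r a α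

/-- A C*-seminorm on a complex *-algebra, with the star operation given explicitly
(to accommodate algebraic tensor products, where the star is `tstar`). -/
structure CstarSeminorm (R : Type*) [NonUnitalRing R] [Module ℂ R] (st : R → R) where
  ν : R → ℝ
  nonneg : ∀ x, 0 ≤ ν x
  add_le : ∀ x y, ν (x + y) ≤ ν x + ν y
  smul_eq : ∀ (c : ℂ) (x : R), ν (c • x) = ‖c‖ * ν x
  mul_le : ∀ x y, ν (x * y) ≤ ν x * ν y
  cstar : ∀ x, ν (st x * x) = ν x ^ 2

def CstarSeminorm.IsNorm {R : Type*} [NonUnitalRing R] [Module ℂ R] {st : R → R}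
    (p : CstarSeminorm R st) : Prop := ∀ x, p.ν x = 0 → x = 0

/-- `γ` is the maximal C*-norm: it is a norm and dominates every C*-seminorm. -/
def CstarSeminorm.IsMax {R : Type*} [NonUnitalRing R] [Module ℂ R] {st : R → R}
    (γ : CstarSeminorm R st) : Prop :=
  γ.IsNorm ∧ ∀ p : CstarSeminorm R st, ∀ x, p.ν x ≤ γ.ν x

/-- `γ` is the minimal C*-norm: it is a norm dominated by every C*-norm. -/
def CstarSeminorm.IsMin {R : Type*} [NonUnitalRing R] [Module ℂ R] {st : R → R}
    (γ : CstarSeminorm R st) : Prop :=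
  γ.IsNorm ∧ ∀ p : CstarSeminorm R st, p.IsNorm → ∀ x, γ.ν x ≤ p.ν x

/-- Quotient seminorm `‖x + I‖ = inf_{i ∈ I} ν (x + i)`. -/
def quotNorm {R : Type*} [AddCommGroup R] (ν : R → ℝ) (I : Set R) (x : R) : ℝ :=
  sInf ((fun i => ν (x + i)) '' I)

/-- The two-sided ideal (as a `ℂ`-submodule) generated by a set `G`. -/
def idealSpan (R : Type*) [NonUnitalRing R] [Module ℂ R] (G : Set R) : Submodule ℂ R :=
  Submodule.span ℂ
    {y | ∃ g ∈ G, y = g ∨ (∃ u, y = u * g) ∨ (∃ v, y = g * v) ∨ ∃ u v, y = u * g * v}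

/-- The star operation on the algebraic tensor product `A ⊗[ℂ] B`,
`(a ⊗ b)* = a* ⊗ b*` (conjugate-linear, hence only an `AddMonoidHom`). -/
def tstar (A B : Type*) [Ring A] [StarRing A] [Algebra ℂ A] [StarModule ℂ A]
    [Ring B] [StarRing B] [Algebra ℂ B] [StarModule ℂ B] : A ⊗[ℂ] B →+ A ⊗[ℂ] B :=
  TensorProduct.liftAddHom
    { toFun := fun a =>
        { toFun := fun b => star a ⊗ₜ[ℂ] star b
          map_zero' := by simp
          map_add' := fun b c => by simp [star_add, TensorProduct.tmul_add] }
      map_zero' := by ext b; simp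
      map_add' := fun a c => by ext b; simp [star_add, TensorProduct.add_tmul] }
    (fun c a b => by simp [star_smul, TensorProduct.smul_tmul, TensorProduct.tmul_smul])

section TensorIdeal

variable {𝔄 A B : Type*}
  [NormedRing 𝔄] [StarRing 𝔄] [NormedAlgebra ℂ 𝔄]
  [NormedRing A] [StarRing A] [NormedAlgebra ℂ A]
  [NormedRing B] [StarRing B] [NormedAlgebra ℂ B]

/-- Generators `a·α ⊗ b − a ⊗ α·b` of the module ideal `I_{A,B}`. -/
def tensorGens (actA : CompatibleAction 𝔄 A) (actB : CompatibleAction 𝔄 B) :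
    Set (A ⊗[ℂ] B) :=
  {x | ∃ (α : 𝔄) (a : A) (b : B), x = (actA.r a α) ⊗ₜ[ℂ] b - a ⊗ₜ[ℂ] (actB.l α b)}

/-- The ideal `I_{A,B}` of `A ⊙ B` generated by `a·α ⊗ b − a ⊗ α·b`. -/
def moduleIdeal (actA : CompatibleAction 𝔄 A) (actB : CompatibleAction 𝔄 B) :
    Submodule ℂ (A ⊗[ℂ] B) :=
  idealSpan _ (tensorGens actA actB)

end TensorIdeal

/-- Algebraic positivity in a *-ring: `x = y* y`. -/
def StarPos {R : Type*} [Mul R] [Star R] (x : R) : Prop := ∃ y, x = star y * y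

/-- A completely positive map: positive matrices over `A` map to positive matrices over `B`. -/
def IsCP {A B : Type*} [NonUnitalRing A] [StarRing A] [NonUnitalRing B] [StarRing B]
    (u : A → B) : Prop :=
  ∀ (n : ℕ) (M : Matrix (Fin n) (Fin n) A), StarPos M → StarPos (M.map u)

/-- An `𝔄`-bimodule map. -/
def IsModuleMap {𝔄 A B : Type*} [NonUnitalNormedRing 𝔄] [StarRing 𝔄] [NormedSpace ℂ 𝔄]
    [NonUnitalNormedRing A] [StarRing A] [NormedSpace ℂ A]
    [NonUnitalNormedRing B] [StarRing B] [NormedSpace ℂ B]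
    (actA : CompatibleAction 𝔄 A) (actB : CompatibleAction 𝔄 B) (u : A → B) : Prop :=
  (∀ α a, u (actA.l α a) = actB.l α (u a)) ∧ ∀ a α, u (actA.r a α) = actB.r (u a) α

/-! Over `ℂ` the tensor product of the injective maps `π`, `σ` is injective. Since the actions
are compatible with multiplication, `π a * π (1·α) = π (a·α)` and `σ (α·1) * σ b = σ (α·b)`,
so every generator of `I'` is the image of a generator of `I_{A,B}`; as the multipliers in `I'`
also come from `A ⊙ B`, `I'` lies in the image of `I_{A,B}`, and injectivity pulls the
membership back. -/

namespace CompatibleAction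

variable {𝔄 A : Type*} [NonUnitalNormedRing 𝔄] [StarRing 𝔄] [NormedSpace ℂ 𝔄]
  [NormedRing A] [StarRing A] [NormedSpace ℂ A]

theorem r_eq_mul_r_one (act : CompatibleAction 𝔄 A) (a : A) (α : 𝔄) :
    act.r a α = a * act.r 1 α := by
  simpa using act.mul_r a 1 α

theorem l_eq_l_one_mul (act : CompatibleAction 𝔄 A) (α : 𝔄) (b : A) :
    act.l α b = act.l α 1 * b := by
  simpa using act.l_mul α 1 b

end CompatibleAction

theorem Algebra.TensorProduct.map_injective_of_flat {R A B C D : Type*} [CommRing R]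
    [Ring A] [Algebra R A] [Ring B] [Algebra R B] [Ring C] [Algebra R C] [Ring D] [Algebra R D]
    [Module.Flat R B] [Module.Flat R C] {f : A →ₐ[R] C} {g : B →ₐ[R] D}
    (hf : Function.Injective f) (hg : Function.Injective g) :
    Function.Injective (Algebra.TensorProduct.map f g) :=
  TensorProduct.map_injective_of_flat_flat f.toLinearMap g.toLinearMap hf hg

theorem span_idealGens_le_map_idealSpan {R S F : Type*} [NonUnitalRing R] [Module ℂ R]
    [NonUnitalRing S] [Module ℂ S] [FunLike F R S] [NonUnitalAlgHomClass F ℂ R S] (f : F)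
    {G : Set R} {G' : Set S} (hG : G' ⊆ f '' G) :
    Submodule.span ℂ {y | ∃ g ∈ G', y = g ∨ (∃ u, y = f u * g) ∨ (∃ v, y = g * f v) ∨
      ∃ u v, y = f u * g * f v} ≤ (idealSpan R G).map (f : R →ₗ[ℂ] S) := by
  refine Submodule.span_le.mpr ?_
  rintro y ⟨g, hg, hy⟩
  obtain ⟨g, hgG, rfl⟩ := hG hg
  have mem {z : R} (hz : z = g ∨ (∃ u, z = u * g) ∨ (∃ v, z = g * v) ∨ ∃ u v, z = u * g * v) :
      f z ∈ (idealSpan R G).map (f : R →ₗ[ℂ] S) :=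
    Submodule.mem_map_of_mem (Submodule.subset_span ⟨g, hgG, hz⟩)
  rcases hy with rfl | ⟨u, rfl⟩ | ⟨v, rfl⟩ | ⟨u, v, rfl⟩
  · exact mem (Or.inl rfl)
  · simpa using mem (Or.inr (Or.inl ⟨u, rfl⟩))
  · simpa using mem (Or.inr (Or.inr (Or.inl ⟨v, rfl⟩)))
  · simpa using mem (Or.inr (Or.inr (Or.inr ⟨u, v, rfl⟩)))

theorem moduleTensor_rep_injective_general
    {𝔄 A B H K : Type*}
    [NormedRing 𝔄] [StarRing 𝔄] [NormedAlgebra ℂ 𝔄]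
    [NormedRing A] [StarRing A] [NormedAlgebra ℂ A]
    [NormedRing B] [StarRing B] [NormedAlgebra ℂ B]
    [NormedAddCommGroup H] [InnerProductSpace ℂ H] [CompleteSpace H]
    [NormedAddCommGroup K] [InnerProductSpace ℂ K] [CompleteSpace K]
    (actA : CompatibleAction 𝔄 A) (actB : CompatibleAction 𝔄 B)
    (π : A →⋆ₐ[ℂ] (H →L[ℂ] H)) (hπ : Function.Injective π)
    (σ : B →⋆ₐ[ℂ] (K →L[ℂ] K)) (hσ : Function.Injective σ) :
    -- `π ⊙ σ : A ⊙ B → B(H) ⊙ B(K)`: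
    letI Θ : A ⊗[ℂ] B →ₐ[ℂ] ((H →L[ℂ] H) ⊗[ℂ] (K →L[ℂ] K)) :=
      Algebra.TensorProduct.map π.toAlgHom σ.toAlgHom
    -- the ideal `I'` of `π(A) ⊙ σ(B)` generated by
    -- `π(a)·α ⊗ σ(b) − π(a) ⊗ α·σ(b)` with `x·α = x π(1·α)` and `α·y = σ(α·1) y`:
    letI I' : Submodule ℂ ((H →L[ℂ] H) ⊗[ℂ] (K →L[ℂ] K)) :=
      Submodule.span ℂ {y | ∃ g ∈ {x | ∃ (α : 𝔄) (a : A) (b : B),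
            x = (π a * π (actA.r 1 α))
                ⊗ₜ[ℂ] (σ b) - (π a) ⊗ₜ[ℂ] (σ (actB.l α 1) * σ b)},
          y = g ∨ (∃ u : A ⊗[ℂ] B, y = Θ u * g) ∨ (∃ v : A ⊗[ℂ] B, y = g * Θ v) ∨
            ∃ u v : A ⊗[ℂ] B, y = Θ u * g * Θ v}
    ∀ x : A ⊗[ℂ] B, Θ x ∈ I' → x ∈ moduleIdeal actA actB := by
  intro x hx
  set Θ := Algebra.TensorProduct.map π.toAlgHom σ.toAlgHom
  have hΘ : Function.Injective Θ := Algebra.TensorProduct.map_injective_of_flat hπ hσ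
  have hgens : {x | ∃ (α : 𝔄) (a : A) (b : B), x = (π a * π (actA.r 1 α)) ⊗ₜ[ℂ] (σ b)
      - (π a) ⊗ₜ[ℂ] (σ (actB.l α 1) * σ b)} ⊆ Θ '' tensorGens actA actB := by
    rintro _ ⟨α, a, b, rfl⟩
    refine ⟨_, ⟨α, a, b, rfl⟩, ?_⟩
    simp [Θ, actA.r_eq_mul_r_one a, actB.l_eq_l_one_mul α b]
  obtain ⟨y, hy, hyx⟩ := span_idealGens_le_map_idealSpan Θ hgens hx
  exact hΘ hyx ▸ hy

/-- Let `π : A → B(H)`, `σ : B → B(K)` be injective *-representations of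
unital C*-algebras with compatible `𝔄`-actions, endow `B(H)`, `B(K)` with the actions
`x·α = x π(1·α)`, `α·y = σ(α·1) y`, and let `I'` be the corresponding ideal of
`π(A) ⊙ σ(B)`.  Then the induced map `π ⊙_𝔄 σ : A ⊙_𝔄 B → (π(A) ⊙ σ(B))/I'` is
injective; i.e. if `(π ⊙ σ)(x) ∈ I'` then `x ∈ I_{A,B}`. -/
theorem moduleTensor_rep_injective
    {𝔄 A B H K : Type*}
    [NormedRing 𝔄] [StarRing 𝔄] [CStarRing 𝔄] [NormedAlgebra ℂ 𝔄] [StarModule ℂ 𝔄]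
    [CompleteSpace 𝔄]
    [NormedRing A] [StarRing A] [CStarRing A] [NormedAlgebra ℂ A] [StarModule ℂ A]
    [CompleteSpace A]
    [NormedRing B] [StarRing B] [CStarRing B] [NormedAlgebra ℂ B] [StarModule ℂ B]
    [CompleteSpace B]
    [NormedAddCommGroup H] [InnerProductSpace ℂ H] [CompleteSpace H]
    [NormedAddCommGroup K] [InnerProductSpace ℂ K] [CompleteSpace K]
    (actA : CompatibleAction 𝔄 A) (actB : CompatibleAction 𝔄 B)
    (π : A →⋆ₐ[ℂ] (H →L[ℂ] H)) (hπ : Function.Injective π)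
    (σ : B →⋆ₐ[ℂ] (K →L[ℂ] K)) (hσ : Function.Injective σ) :
    -- `π ⊙ σ : A ⊙ B → B(H) ⊙ B(K)`:
    letI Θ : A ⊗[ℂ] B →ₐ[ℂ] ((H →L[ℂ] H) ⊗[ℂ] (K →L[ℂ] K)) :=
      Algebra.TensorProduct.map π.toAlgHom σ.toAlgHom
    -- the ideal `I'` of `π(A) ⊙ σ(B)` generated by
    -- `π(a)·α ⊗ σ(b) − π(a) ⊗ α·σ(b)` with `x·α = x π(1·α)` and `α·y = σ(α·1) y`:
    letI I' : Submodule ℂ ((H →L[ℂ] H) ⊗[ℂ] (K →L[ℂ] K)) :=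
      Submodule.span ℂ {y | ∃ g ∈ {x | ∃ (α : 𝔄) (a : A) (b : B),
            x = (π a * π (actA.r 1 α))
                ⊗ₜ[ℂ] (σ b) - (π a) ⊗ₜ[ℂ] (σ (actB.l α 1) * σ b)},
          y = g ∨ (∃ u : A ⊗[ℂ] B, y = Θ u * g) ∨ (∃ v : A ⊗[ℂ] B, y = g * Θ v) ∨
            ∃ u v : A ⊗[ℂ] B, y = Θ u * g * Θ v}
    ∀ x : A ⊗[ℂ] B, Θ x ∈ I' → x ∈ moduleIdeal actA actB :=
  moduleTensor_rep_injective_general actA actB π hπ σ hσ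
end
end

section
/- Let N be a closed two-sided ideal and 𝔄-submodule of a C*-algebra A with compatible 𝔄-action. Then J_N = J_A ∩ N, where J_A (resp. J_N) is the closed ideal of A (resp. N) generated by elements (x·α)y − x(α·y) for x, y in A (resp. N), α ∈ 𝔄. -/
open scoped TensorProduct
noncomputable section

/-!
An element `x` of the ideal `N` is approximated by `e x e'`, where `e = f_ε(x x*)` and
`e' = f_ε(x* x)` with `f_ε(t) = t / (ε + t)`; since `f_ε(t) = t (ε + t)⁻¹`, both `e` and `e'`
lie in `N`. Compressing a generator of `J_A` gives a generator of `J_N`,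
`e ((a·α)a' − a(α·a')) e' = ((e a)·α)(a' e') − (e a)(α·(a' e'))`, so compression by `e, e'`
maps `J_A` into `J_N`, and `x = lim_{ε → 0⁺} e x e'` lies in `J_N` when `x ∈ J_A ∩ N`.
The limit holds because `‖x − e x‖² = ‖(1 − e) x x* (1 − e)‖ ≤ sup_{t ≥ 0} t ε² / (ε + t)² ≤ ε`.
-/

open Filter Topology

lemma mul_sq_div_add_le {ε t : ℝ} (hε : 0 < ε) (ht : 0 ≤ t) : t * (ε / (ε + t)) ^ 2 ≤ ε := by
  rw [div_pow, mul_div_assoc', div_le_iff₀ (by positivity)]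
  nlinarith [mul_nonneg hε.le ht, sq_nonneg t]

section LocalApproximateUnit

variable {A : Type*} [CStarAlgebra A] [PartialOrder A] [StarOrderedRing A]

lemma cfc_div_add_eq_mul {b : A} (hb : 0 ≤ b) {ε : ℝ} (hε : 0 < ε) :
    cfc (fun t : ℝ => t / (ε + t)) b = b * cfc (fun t : ℝ => (ε + t)⁻¹) b := by
  have hinv : ContinuousOn (fun t : ℝ => (ε + t)⁻¹) (spectrum ℝ b) :=
    ContinuousOn.inv₀ (by fun_prop) fun t ht =>
      (add_pos_of_pos_of_nonneg hε (spectrum_nonneg_of_nonneg hb ht)).ne'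
  have h := cfc_mul (fun t : ℝ => t) (fun t : ℝ => (ε + t)⁻¹) b continuousOn_id hinv
  rwa [cfc_id' ℝ b] at h

lemma norm_cfc_div_add_le_one {b : A} (hb : 0 ≤ b) {ε : ℝ} (hε : 0 < ε) :
    ‖cfc (fun t : ℝ => t / (ε + t)) b‖ ≤ 1 := by
  refine norm_cfc_le zero_le_one fun t ht => ?_
  have ht0 : 0 ≤ t := spectrum_nonneg_of_nonneg hb ht
  rw [Real.norm_of_nonneg (by positivity), div_le_one (by positivity)]
  linarith

lemma norm_sub_cfc_mul_le (x : A) {ε : ℝ} (hε : 0 < ε) :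
    ‖x - cfc (fun t : ℝ => t / (ε + t)) (x * star x) * x‖ ≤ √ε := by
  set b := x * star x
  have hb : 0 ≤ b := mul_star_self_nonneg x
  have hpos : ∀ t ∈ spectrum ℝ b, ε + t ≠ 0 := fun t ht =>
    (add_pos_of_pos_of_nonneg hε (spectrum_nonneg_of_nonneg hb ht)).ne'
  have hc_cont : ContinuousOn (fun t : ℝ => ε / (ε + t)) (spectrum ℝ b) :=
    continuousOn_const.div (by fun_prop) hpos
  set c := cfc (fun t : ℝ => ε / (ε + t)) b
  have hc : x - cfc (fun t : ℝ => t / (ε + t)) b * x = c * x := by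
    have h : cfc (fun t : ℝ => t / (ε + t)) b = cfc (fun t : ℝ => 1 - ε / (ε + t)) b :=
      cfc_congr fun t ht => by field_simp [hpos t ht]; ring
    rw [h, cfc_sub _ _ b (by fun_prop) hc_cont, cfc_const_one ℝ b, sub_mul, one_mul, sub_sub_cancel]
  have hcbc : c * b * c = cfc (fun t : ℝ => t * (ε / (ε + t)) ^ 2) b := by
    have h1 := cfc_mul (fun t : ℝ => ε / (ε + t)) (fun t : ℝ => t) b hc_cont continuousOn_id
    have h2 := cfc_mul (fun t : ℝ => ε / (ε + t) * t) (fun t : ℝ => ε / (ε + t)) b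
      (hc_cont.mul continuousOn_id) hc_cont
    rw [cfc_id' ℝ b] at h1
    rw [← h1, ← h2]
    exact cfc_congr fun t _ => by ring
  have hsq : ‖c * x‖ ^ 2 ≤ ε := by
    have hc_sa : IsSelfAdjoint c := cfc_predicate _ b
    rw [sq, ← CStarRing.norm_self_mul_star, star_mul, hc_sa.star_eq, ← mul_assoc,
      mul_assoc c, hcbc]
    refine norm_cfc_le hε.le fun t ht => ?_
    have ht0 : 0 ≤ t := spectrum_nonneg_of_nonneg hb ht
    rw [Real.norm_of_nonneg (by positivity)]
    exact mul_sq_div_add_le hε ht0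
  rw [hc]
  exact Real.le_sqrt_of_sq_le hsq

lemma norm_sub_mul_cfc_le (x : A) {ε : ℝ} (hε : 0 < ε) :
    ‖x - x * cfc (fun t : ℝ => t / (ε + t)) (star x * x)‖ ≤ √ε := by
  have h := norm_sub_cfc_mul_le (star x) hε
  rwa [star_star, ← norm_star, star_sub, star_mul, star_star,
    (cfc_predicate _ (star x * x) : IsSelfAdjoint _).star_eq] at h

lemma tendsto_cfc_mul_mul_cfc (x : A) :
    Tendsto (fun ε : ℝ => cfc (fun t : ℝ => t / (ε + t)) (x * star x) * x *
      cfc (fun t : ℝ => t / (ε + t)) (star x * x)) (𝓝[>] 0) (𝓝 x) := by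
  rw [tendsto_iff_norm_sub_tendsto_zero]
  have hsqrt : Tendsto (fun ε : ℝ => 2 * √ε) (𝓝[>] 0) (𝓝 0) := by
    simpa using ((Real.continuous_sqrt.tendsto 0).const_mul 2).mono_left nhdsWithin_le_nhds
  refine squeeze_zero' (.of_forall fun _ => norm_nonneg _) ?_ hsqrt
  filter_upwards [self_mem_nhdsWithin] with ε (hε : 0 < ε)
  set e := cfc (fun t : ℝ => t / (ε + t)) (x * star x)
  set e' := cfc (fun t : ℝ => t / (ε + t)) (star x * x)
  have he : ‖e‖ ≤ 1 := norm_cfc_div_add_le_one (mul_star_self_nonneg x) hε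
  calc ‖e * x * e' - x‖ = ‖e * (x * e' - x) + (e * x - x)‖ := by noncomm_ring
    _ ≤ ‖e‖ * ‖x * e' - x‖ + ‖e * x - x‖ :=
        (norm_add_le _ _).trans (add_le_add_left (norm_mul_le _ _) _)
    _ ≤ 1 * √ε + √ε := by
        rw [norm_sub_rev, norm_sub_rev (e * x)]
        gcongr
        exacts [norm_sub_mul_cfc_le x hε, norm_sub_cfc_mul_le x hε]
    _ = 2 * √ε := by ring

end LocalApproximateUnit

namespace CompatibleAction

variable {𝔄 A : Type*} [NonUnitalNormedRing 𝔄] [StarRing 𝔄] [NormedSpace ℂ 𝔄]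
  [NormedRing A] [StarRing A] [NormedAlgebra ℂ A]

lemma mul_sub_mul_mul (act : CompatibleAction 𝔄 A) (e e' a a' : A) (α : 𝔄) :
    e * (act.r a α * a' - a * act.l α a') * e' =
      act.r (e * a) α * (a' * e') - e * a * act.l α (a' * e') := by
  rw [act.mul_r, act.l_mul]
  noncomm_ring

lemma mapsTo_closure_span (act : CompatibleAction 𝔄 A) {N : Set A} {e e' : A}
    (he : ∀ a, e * a ∈ N) (he' : ∀ a, a * e' ∈ N) :
    Set.MapsTo (fun z => e * z * e')
      (closure (Submodule.span ℂ
        {x | ∃ (α : 𝔄) (a a' : A), x = act.r a α * a' - a * act.l α a'} : Set A))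
      (closure (Submodule.span ℂ
        {x | ∃ (α : 𝔄), ∃ a ∈ N, ∃ a' ∈ N, x = act.r a α * a' - a * act.l α a'} : Set A)) := by
  refine Set.MapsTo.closure (fun z hz => ?_) (by fun_prop)
  refine (Submodule.span_le (p := (Submodule.span ℂ _).comap
    (LinearMap.mulLeftRight ℂ (e, e')))).mpr ?_ hz
  rintro _ ⟨α, a, a', rfl⟩
  rw [SetLike.mem_coe, Submodule.mem_comap, LinearMap.mulLeftRight_apply, mul_sub_mul_mul]
  exact Submodule.subset_span ⟨α, e * a, he a, a' * e', he' a', rfl⟩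

end CompatibleAction

theorem JN_eq_JA_inter_N_general
    {𝔄 A : Type*}
    [NormedRing 𝔄] [StarRing 𝔄] [NormedAlgebra ℂ 𝔄]
    [NormedRing A] [StarRing A] [CStarRing A] [NormedAlgebra ℂ A] [StarModule ℂ A]
    [CompleteSpace A]
    (act : CompatibleAction 𝔄 A)
    (N : Set A) (hclosed : IsClosed N)
    (hideal_l : ∀ a : A, ∀ n ∈ N, a * n ∈ N) (hideal_r : ∀ a : A, ∀ n ∈ N, n * a ∈ N)
    (hsub : ∀ (c : ℂ), ∀ n ∈ N, c • n ∈ N) (hadd : ∀ m ∈ N, ∀ n ∈ N, m + n ∈ N)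
    (hzero : (0 : A) ∈ N)
    (hmodr : ∀ (α : 𝔄), ∀ n ∈ N, act.r n α ∈ N) :
    closure ((Submodule.span ℂ
        {x | ∃ (α : 𝔄), ∃ a ∈ N, ∃ a' ∈ N, x = (act.r a α) * a' - a * (act.l α a')} : Set A))
      = closure ((Submodule.span ℂ
        {x | ∃ (α : 𝔄) (a a' : A), x = (act.r a α) * a' - a * (act.l α a')} : Set A)) ∩ N := by
  let _ : CStarAlgebra A := {}
  let _ : PartialOrder A := CStarAlgebra.spectralOrder A
  have _ : StarOrderedRing A := CStarAlgebra.spectralOrderedRing A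
  let NS : Submodule ℂ A :=
    { carrier := N, add_mem' := fun hm hn => hadd _ hm _ hn, zero_mem' := hzero, smul_mem' := hsub }
  refine subset_antisymm (Set.subset_inter ?_ ?_) ?_
  · refine closure_mono (Submodule.span_mono ?_)
    rintro _ ⟨α, a, -, a', -, rfl⟩
    exact ⟨α, a, a', rfl⟩
  · refine hclosed.closure_subset_iff.mpr (Submodule.span_le (p := NS) |>.mpr ?_)
    rintro _ ⟨α, a, ha, a', -, rfl⟩
    exact NS.sub_mem (hideal_r a' _ (hmodr α a ha)) (hideal_r _ a ha)
  · rintro x ⟨hxJ, hxN⟩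
    rw [← closure_closure]
    refine mem_closure_of_tendsto (tendsto_cfc_mul_mul_cfc x) ?_
    filter_upwards [self_mem_nhdsWithin] with ε (hε : 0 < ε)
    refine act.mapsTo_closure_span (fun a => ?_) (fun a => ?_) hxJ
    · rw [cfc_div_add_eq_mul (mul_star_self_nonneg x) hε]
      exact hideal_r a _ (hideal_r _ _ (hideal_r _ x hxN))
    · rw [cfc_div_add_eq_mul (star_mul_self_nonneg x) hε]
      exact hideal_l a _ (hideal_r _ _ (hideal_l _ x hxN))

/-- For a closed two-sided ideal and `𝔄`-submodule `N` of a C*-algebra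
`A` with compatible `𝔄`-action, `J_N = J_A ∩ N`, where `J_A` (resp. `J_N`) is the closed
linear span of the elements `(x·α)y − x(α·y)` with `x, y ∈ A` (resp. `x, y ∈ N`). -/
theorem JN_eq_JA_inter_N
    {𝔄 A : Type*}
    [NormedRing 𝔄] [StarRing 𝔄] [CStarRing 𝔄] [NormedAlgebra ℂ 𝔄] [StarModule ℂ 𝔄]
    [CompleteSpace 𝔄]
    [NormedRing A] [StarRing A] [CStarRing A] [NormedAlgebra ℂ A] [StarModule ℂ A]
    [CompleteSpace A]
    (act : CompatibleAction 𝔄 A)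
    (N : Set A) (hclosed : IsClosed N)
    (hideal_l : ∀ a : A, ∀ n ∈ N, a * n ∈ N) (hideal_r : ∀ a : A, ∀ n ∈ N, n * a ∈ N)
    (hsub : ∀ (c : ℂ), ∀ n ∈ N, c • n ∈ N) (hadd : ∀ m ∈ N, ∀ n ∈ N, m + n ∈ N)
    (hzero : (0 : A) ∈ N)
    (hmodl : ∀ (α : 𝔄), ∀ n ∈ N, act.l α n ∈ N) (hmodr : ∀ (α : 𝔄), ∀ n ∈ N, act.r n α ∈ N) :
    closure ((Submodule.span ℂ
        {x | ∃ (α : 𝔄), ∃ a ∈ N, ∃ a' ∈ N, x = (act.r a α) * a' - a * (act.l α a')} : Set A))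
      = closure ((Submodule.span ℂ
        {x | ∃ (α : 𝔄) (a a' : A), x = (act.r a α) * a' - a * (act.l α a')} : Set A)) ∩ N :=
  JN_eq_JA_inter_N_general act N hclosed hideal_l hideal_r hsub hadd hzero hmodr
end
end

section
/- Let N be a closed two-sided ideal and 𝔄-submodule of a C*-algebra A with compatible 𝔄-action, and q: A → A/N the quotient map. Then q(J_A) ⊆ J_{A/N}, the induced map q̃: A/J_A → (A/N)/J_{A/N} is a well-defined surjective *-homomorphism, the inclusion ι: N/J_N → A/J_A is injective, and ker(q̃) = ι(N/J_N). Consequently (A/J_A)/(N/J_N) ≅ (A/N)/J_{A/N}. -/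
open scoped TensorProduct
noncomputable section

/-! `q` is contractive, surjective and intertwines the actions, so it carries the generators of
`J_A` onto those of `J_{A/N}`; with the quotient-norm formula this gives everything except
`J_A ∩ N ⊆ J_N`. For that, approximate `n ∈ N ∩ J_A` by `j` in the span of the generators of
`J_A`. For `h = n n*` and small `t > 0`, `e = h (t + h)⁻¹ = n (n* (t + h)⁻¹)` lies in `N`, has
norm at most `1`, and `‖n - e n‖² = ‖(1 - e) h (1 - e)‖ ≤ t`; symmetrically there is `e' ∈ N` on
the right. Then `e j e'` approximates `n` and lies in the span of the generators of `J_N`, since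
`e ((a·α) a' - a (α·a')) e' = ((e a)·α) (a' e') - (e a) (α·(a' e'))`. -/

open scoped Pointwise

section ApproximateUnit

variable {A : Type*} [CStarAlgebra A]

theorem exists_isSelfAdjoint_mul_norm_le_one_norm_conj_one_sub_le
    [PartialOrder A] [StarOrderedRing A] {h : A} (hh : 0 ≤ h) {t : ℝ} (ht : 0 < t) :
    ∃ w : A, IsSelfAdjoint (h * w) ∧ ‖h * w‖ ≤ 1 ∧ ‖(1 - h * w) * h * (1 - h * w)‖ ≤ t := by
  have hspec : ∀ s ∈ spectrum ℝ h, 0 ≤ s := fun s hs => spectrum_nonneg_of_nonneg hh hs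
  have hpos : ∀ s ∈ spectrum ℝ h, t + s ≠ 0 := fun s hs => by positivity [hspec s hs]
  have hcont : ∀ c : ℝ, ContinuousOn (fun s => c / (t + s)) (spectrum ℝ h) :=
    fun c => ContinuousOn.div (by fun_prop) (by fun_prop) hpos
  have he : h * cfc (fun s => (t + s)⁻¹) h = cfc (fun s => s / (t + s)) h := by
    simp only [div_eq_mul_inv]
    rw [cfc_mul (fun s => s) _ h (by fun_prop) (by simpa using hcont 1), cfc_id' ℝ h]
  have hu : 1 - cfc (fun s => s / (t + s)) h = cfc (fun s => t / (t + s)) h := by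
    rw [← cfc_const_one ℝ h, ← cfc_sub _ _ h]
    refine cfc_congr fun s hs => ?_
    field_simp [hpos s hs]
    ring
  have hconj : cfc (fun s => t / (t + s)) h * h * cfc (fun s => t / (t + s)) h =
      cfc (fun s => t / (t + s) * s * (t / (t + s))) h := by
    rw [cfc_mul (fun s => t / (t + s) * s) _ h ((hcont t).mul (by fun_prop)) (hcont t),
      cfc_mul _ (fun s => s) h (hcont t) (by fun_prop), cfc_id' ℝ h]
  refine ⟨cfc (fun s => (t + s)⁻¹) h, he ▸ cfc_predicate _ h, ?_, ?_⟩
  · rw [he]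
    refine norm_cfc_le zero_le_one fun s hs => ?_
    have hs0 := hspec s hs
    rw [Real.norm_of_nonneg (by positivity), div_le_one (by positivity)]
    linarith
  · rw [he, hu, hconj]
    refine norm_cfc_le ht.le fun s hs => ?_
    have hs0 := hspec s hs
    rw [Real.norm_of_nonneg (by positivity), div_mul_eq_mul_div, div_mul_div_comm,
      div_le_iff₀ (by positivity)]
    nlinarith [pow_pos ht 3, mul_nonneg (mul_nonneg ht.le ht.le) hs0,
      mul_nonneg (mul_nonneg ht.le hs0) hs0]

theorem exists_norm_mul_le_one_and_norm_sub_mul_mul_le (x : A) {δ : ℝ} (hδ : 0 < δ) :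
    ∃ y : A, ‖x * y‖ ≤ 1 ∧ ‖x - x * y * x‖ ≤ δ := by
  let _ := CStarAlgebra.spectralOrder A
  have _ := CStarAlgebra.spectralOrderedRing A
  obtain ⟨w, hsa, hle, hconj⟩ :=
    exists_isSelfAdjoint_mul_norm_le_one_norm_conj_one_sub_le (mul_star_self_nonneg x)
      (pow_pos hδ 2)
  refine ⟨star x * w, by rwa [← mul_assoc], ?_⟩
  have hsq : ‖x - x * (star x * w) * x‖ ^ 2 =
      ‖(1 - x * star x * w) * (x * star x) * (1 - x * star x * w)‖ := by
    rw [← mul_assoc x, sq, ← CStarRing.norm_self_mul_star]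
    congr 1
    rw [star_sub, star_mul, hsa.star_eq]
    noncomm_ring
  exact (pow_le_pow_iff_left₀ (norm_nonneg _) hδ.le two_ne_zero).mp (hsq ▸ hconj)

theorem exists_norm_mul_le_one_and_norm_sub_mul_mul_le' (x : A) {δ : ℝ} (hδ : 0 < δ) :
    ∃ y : A, ‖y * x‖ ≤ 1 ∧ ‖x - x * y * x‖ ≤ δ := by
  obtain ⟨y, hle, hsub⟩ := exists_norm_mul_le_one_and_norm_sub_mul_mul_le (star x) hδ
  refine ⟨star y, ?_, ?_⟩
  · rwa [← norm_star, star_mul, star_star]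
  · rwa [← norm_star, star_sub, star_mul, star_mul, star_star, ← mul_assoc] at hsub

end ApproximateUnit

theorem norm_sub_mul_mul_le {R : Type*} [NonUnitalSeminormedRing R] {x y e e' : R}
    (he : ‖e‖ ≤ 1) (he' : ‖e'‖ ≤ 1) :
    ‖x - e * y * e'‖ ≤ ‖x - e * x‖ + ‖x - x * e'‖ + ‖x - y‖ := by
  have hsplit : x - e * y * e' = (x - e * x) + e * (x - x * e') + e * (x - y) * e' := by
    noncomm_ring
  have h₁ : ‖e * (x - x * e')‖ ≤ ‖x - x * e'‖ :=
    (norm_mul_le _ _).trans (mul_le_of_le_one_left (norm_nonneg _) he)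
  have h₂ : ‖e * (x - y) * e'‖ ≤ ‖x - y‖ := by
    calc ‖e * (x - y) * e'‖ ≤ ‖e‖ * ‖x - y‖ * ‖e'‖ := norm_mul₃_le
      _ ≤ 1 * ‖x - y‖ * 1 := by gcongr
      _ = ‖x - y‖ := by ring
  rw [hsplit]
  exact (norm_add₃_le).trans (by linarith)

section QuotientNorm

variable {E G F : Type*} [SeminormedAddCommGroup E] [SeminormedAddCommGroup G]
  [FunLike F E G] [AddMonoidHomClass F E G] (q : F) {N : Set E}

theorem continuous_of_norm_map_eq_infDist (h0 : 0 ∈ N)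
    (hq : ∀ a, ‖q a‖ = Metric.infDist a N) : Continuous q :=
  AddMonoidHomClass.continuous_of_bound q 1 fun a => by
    simpa [hq a] using Metric.infDist_le_dist_of_mem h0 (x := a)

theorem mem_closure_add_of_map_mem_closure_image (hN : N.Nonempty)
    (hq : ∀ a, ‖q a‖ = Metric.infDist a N) {S : Set E} {a : E} (ha : q a ∈ closure (q '' S)) :
    a ∈ closure (N + S) := by
  refine Metric.mem_closure_iff.mpr fun ε hε => ?_
  obtain ⟨_, ⟨s, hs, rfl⟩, hdist⟩ := Metric.mem_closure_iff.mp ha ε hε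
  rw [dist_eq_norm, ← map_sub, hq] at hdist
  obtain ⟨n, hn, hdn⟩ := (Metric.infDist_lt_iff hN).mp hdist
  refine ⟨n + s, Set.add_mem_add hn hs, ?_⟩
  rwa [dist_eq_norm, sub_add_eq_sub_sub_swap, ← dist_eq_norm]

theorem map_mem_of_mem_closure_add (hcont : Continuous q) {S : Set E} {T : Set G}
    (hT : IsClosed T) (hN : ∀ n ∈ N, q n = 0) (hS : ∀ s ∈ S, q s ∈ T) {a : E}
    (ha : a ∈ closure (N + S)) : q a ∈ T := by
  refine hT.closure_subset (map_mem_closure hcont ha ?_)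
  rintro _ ⟨n, hn, s, hs, rfl⟩
  simpa [hN n hn] using hS s hs

end QuotientNorm

namespace CompatibleAction

variable {𝔄 A B : Type*} [NonUnitalNormedRing 𝔄] [StarRing 𝔄] [NormedSpace ℂ 𝔄]
  [NonUnitalNormedRing A] [StarRing A] [NormedSpace ℂ A]
  [NonUnitalNormedRing B] [StarRing B] [NormedSpace ℂ B]

/-- The generators `(a·α)a' − a(α·a')` of `J_A`. -/
def jGenerators (act : CompatibleAction 𝔄 A) : Set A :=
  {x | ∃ (α : 𝔄) (a a' : A), x = (act.r a α) * a' - a * (act.l α a')}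

/-- The generators `(a·α)a' − a(α·a')` with `a, a' ∈ S`; for an ideal `S` they generate `J_S`. -/
def jGeneratorsOn (act : CompatibleAction 𝔄 A) (S : Set A) : Set A :=
  {x | ∃ (α : 𝔄), ∃ a ∈ S, ∃ a' ∈ S, x = (act.r a α) * a' - a * (act.l α a')}

def jIdeal (act : CompatibleAction 𝔄 A) : Set A :=
  closure (Submodule.span ℂ act.jGenerators : Set A)

def jIdealOn (act : CompatibleAction 𝔄 A) (S : Set A) : Set A :=
  closure (Submodule.span ℂ (act.jGeneratorsOn S) : Set A)

variable {actA : CompatibleAction 𝔄 A} {actB : CompatibleAction 𝔄 B}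
  {F : Type*} [FunLike F A B] [NonUnitalAlgHomClass F ℂ A B] {f : F}

theorem image_jGenerators_subset (hf : IsModuleMap actA actB f) :
    f '' actA.jGenerators ⊆ actB.jGenerators := by
  rintro _ ⟨_, ⟨α, a, a', rfl⟩, rfl⟩
  exact ⟨α, f a, f a', by rw [map_sub, map_mul, map_mul, hf.1, hf.2]⟩

theorem image_jGenerators (hf : IsModuleMap actA actB f) (hsurj : Function.Surjective f) :
    f '' actA.jGenerators = actB.jGenerators := by
  refine (image_jGenerators_subset hf).antisymm ?_
  rintro _ ⟨α, b, b', rfl⟩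
  obtain ⟨a, rfl⟩ := hsurj b
  obtain ⟨a', rfl⟩ := hsurj b'
  exact ⟨_, ⟨α, a, a', rfl⟩, by rw [map_sub, map_mul, map_mul, hf.1, hf.2]⟩

theorem map_mem_jIdeal (hf : IsModuleMap actA actB f) (hcont : Continuous f) {a : A}
    (ha : a ∈ actA.jIdeal) : f a ∈ actB.jIdeal :=
  closure_mono ((Submodule.image_span_subset_span (f : A →ₗ[ℂ] B) _).trans
    (Submodule.span_mono (image_jGenerators_subset (f := f) hf)))
    (map_mem_closure hcont ha (Set.mapsTo_image _ _))

theorem jIdeal_eq_closure_image (hf : IsModuleMap actA actB f) (hsurj : Function.Surjective f) :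
    actB.jIdeal = closure (f '' (Submodule.span ℂ actA.jGenerators : Set A)) := by
  have hspan := Submodule.map_coe (f : A →ₗ[ℂ] B) (Submodule.span ℂ actA.jGenerators)
  rw [← Submodule.span_image, LinearMap.coe_coe, image_jGenerators hf hsurj] at hspan
  rw [jIdeal, hspan]

theorem mul_mul_mem_span_jGeneratorsOn [IsScalarTower ℂ A A] [SMulCommClass ℂ A A]
    (act : CompatibleAction 𝔄 A) {S : Set A} {e e' j : A} (he : ∀ a, e * a ∈ S)
    (he' : ∀ a, a * e' ∈ S) (hj : j ∈ Submodule.span ℂ act.jGenerators) :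
    e * j * e' ∈ Submodule.span ℂ (act.jGeneratorsOn S) := by
  induction hj using Submodule.span_induction with
  | mem x hx =>
    obtain ⟨α, a, a', rfl⟩ := hx
    refine Submodule.subset_span ⟨α, e * a, he a, a' * e', he' a', ?_⟩
    rw [act.mul_r, act.l_mul]
    noncomm_ring
  | zero => simp
  | add x y _ _ hx hy => simpa [mul_add, add_mul] using add_mem hx hy
  | smul c x _ hx => simpa [mul_smul_comm, smul_mul_assoc] using Submodule.smul_mem _ c hx

end CompatibleAction

theorem CompatibleAction.mem_jIdealOn_of_mem_jIdeal {𝔄 A : Type*} [NonUnitalNormedRing 𝔄]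
    [StarRing 𝔄] [NormedSpace ℂ 𝔄] [NormedRing A] [StarRing A] [CStarRing A] [NormedAlgebra ℂ A]
    [StarModule ℂ A] [CompleteSpace A] (act : CompatibleAction 𝔄 A) {N : Set A}
    (hl : ∀ a : A, ∀ n ∈ N, a * n ∈ N) (hr : ∀ a : A, ∀ n ∈ N, n * a ∈ N) {n : A} (hnN : n ∈ N)
    (hn : n ∈ act.jIdeal) : n ∈ act.jIdealOn N := by
  let _ : CStarAlgebra A := {}
  refine Metric.mem_closure_iff.mpr fun ε hε => ?_
  have hδ : 0 < ε / 4 := by positivity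
  obtain ⟨y, hy, hny⟩ := exists_norm_mul_le_one_and_norm_sub_mul_mul_le n hδ
  obtain ⟨z, hz, hnz⟩ := exists_norm_mul_le_one_and_norm_sub_mul_mul_le' n hδ
  obtain ⟨j, hj, hnj⟩ := Metric.mem_closure_iff.mp hn _ hδ
  have hmem : n * y * j * (z * n) ∈ Submodule.span ℂ (act.jGeneratorsOn N) :=
    act.mul_mul_mem_span_jGeneratorsOn (fun a => by simpa [mul_assoc] using hr (y * a) n hnN)
      (fun a => by simpa [mul_assoc] using hl (a * z) n hnN) hj
  refine ⟨_, hmem, ?_⟩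
  have hest := norm_sub_mul_mul_le (x := n) (y := j) hy hz
  rw [← mul_assoc n z n] at hest
  rw [dist_eq_norm] at hnj ⊢
  linarith

theorem quotient_J_ideals_general
    {𝔄 A Q : Type*}
    [NormedRing 𝔄] [StarRing 𝔄] [NormedAlgebra ℂ 𝔄]
    [NormedRing A] [StarRing A] [CStarRing A] [NormedAlgebra ℂ A] [StarModule ℂ A]
    [CompleteSpace A]
    [NormedRing Q] [StarRing Q] [NormedAlgebra ℂ Q]
    (actA : CompatibleAction 𝔄 A) (actQ : CompatibleAction 𝔄 Q)
    (N : Set A)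
    (hideal_l : ∀ a : A, ∀ n ∈ N, a * n ∈ N) (hideal_r : ∀ a : A, ∀ n ∈ N, n * a ∈ N)
    (hzero : (0 : A) ∈ N)
    -- `q : A → Q` realizes `A/N`, as an `𝔄`-module map:
    (q : A →⋆ₐ[ℂ] Q) (hqsurj : Function.Surjective q)
    (hqker : ∀ a : A, q a = 0 ↔ a ∈ N)
    (hqnorm : ∀ a : A, ‖q a‖ = Metric.infDist a N)
    (hqmod : IsModuleMap actA actQ q) :
    -- the three closed ideals `J_A ⊆ A`, `J_{A/N} ⊆ Q`, `J_N ⊆ N`: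
    letI JA : Set A := closure ((Submodule.span ℂ
      {x | ∃ (α : 𝔄) (a a' : A), x = (actA.r a α) * a' - a * (actA.l α a')} : Set A))
    letI JQ : Set Q := closure ((Submodule.span ℂ
      {x | ∃ (α : 𝔄) (y y' : Q), x = (actQ.r y α) * y' - y * (actQ.l α y')} : Set Q))
    letI JN : Set A := closure ((Submodule.span ℂ
      {x | ∃ (α : 𝔄), ∃ a ∈ N, ∃ a' ∈ N, x = (actA.r a α) * a' - a * (actA.l α a')} : Set A))
    -- (1) `q(J_A) ⊆ J_{A/N}`, so `q̃ : A/J_A → (A/N)/J_{A/N}` is well defined;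
    (∀ a ∈ JA, q a ∈ JQ) ∧
    -- (2) `q̃` is surjective;
    (∀ y : Q, ∃ a : A, q a = y) ∧
    -- (3) `ι : N/J_N → A/J_A` is injective (i.e. `J_A ∩ N ⊆ J_N`);
    (∀ n ∈ N, n ∈ JA → n ∈ JN) ∧
    -- (4) `ker q̃ = ι(N/J_N)`, giving `(A/J_A)/(N/J_N) ≅ (A/N)/J_{A/N}`:
    (∀ a : A, q a ∈ JQ ↔ a ∈ closure {x : A | ∃ n ∈ N, ∃ j ∈ JA, x = n + j}) := by
  have hcont : Continuous q := continuous_of_norm_map_eq_infDist q hzero hqnorm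
  have hNJ : {x : A | ∃ n ∈ N, ∃ j ∈ actA.jIdeal, x = n + j} = N + actA.jIdeal := by
    ext
    simp [Set.mem_add, eq_comm]
  refine ⟨fun a => CompatibleAction.map_mem_jIdeal hqmod hcont, hqsurj,
    fun n hnN => actA.mem_jIdealOn_of_mem_jIdeal hideal_l hideal_r hnN, fun a => ?_⟩
  change q a ∈ actQ.jIdeal ↔ a ∈ closure {x : A | ∃ n ∈ N, ∃ j ∈ actA.jIdeal, x = n + j}
  rw [hNJ]
  constructor
  · intro ha
    rw [CompatibleAction.jIdeal_eq_closure_image hqmod hqsurj] at ha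
    exact closure_mono (Set.add_subset_add_left subset_closure)
      (mem_closure_add_of_map_mem_closure_image q ⟨0, hzero⟩ hqnorm ha)
  · exact map_mem_of_mem_closure_add q hcont isClosed_closure (fun n hn => (hqker n).2 hn)
      fun s hs => CompatibleAction.map_mem_jIdeal hqmod hcont hs

/-- Let `N` be a closed two-sided ideal and `𝔄`-submodule of `A`, and
`q : A → Q` a realization of the quotient `A/N`, carrying the induced `𝔄`-action.  Then
`q(J_A) ⊆ J_{A/N}`, the induced map `q̃ : A/J_A → (A/N)/J_{A/N}` is a well-defined
surjection, the canonical map `ι : N/J_N → A/J_A` is injective, and `ker q̃ = ι(N/J_N)`;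
consequently `(A/J_A)/(N/J_N) ≅ (A/N)/J_{A/N}`. -/
theorem quotient_J_ideals
    {𝔄 A Q : Type*}
    [NormedRing 𝔄] [StarRing 𝔄] [CStarRing 𝔄] [NormedAlgebra ℂ 𝔄] [StarModule ℂ 𝔄]
    [CompleteSpace 𝔄]
    [NormedRing A] [StarRing A] [CStarRing A] [NormedAlgebra ℂ A] [StarModule ℂ A]
    [CompleteSpace A]
    [NormedRing Q] [StarRing Q] [CStarRing Q] [NormedAlgebra ℂ Q] [StarModule ℂ Q]
    [CompleteSpace Q]
    (actA : CompatibleAction 𝔄 A) (actQ : CompatibleAction 𝔄 Q)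
    (N : Set A) (hclosed : IsClosed N)
    (hideal_l : ∀ a : A, ∀ n ∈ N, a * n ∈ N) (hideal_r : ∀ a : A, ∀ n ∈ N, n * a ∈ N)
    (hsub : ∀ (c : ℂ), ∀ n ∈ N, c • n ∈ N) (hadd : ∀ m ∈ N, ∀ n ∈ N, m + n ∈ N)
    (hzero : (0 : A) ∈ N)
    (hmodl : ∀ (α : 𝔄), ∀ n ∈ N, actA.l α n ∈ N) (hmodr : ∀ (α : 𝔄), ∀ n ∈ N, actA.r n α ∈ N)
    -- `q : A → Q` realizes `A/N`, as an `𝔄`-module map: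
    (q : A →⋆ₐ[ℂ] Q) (hqsurj : Function.Surjective q)
    (hqker : ∀ a : A, q a = 0 ↔ a ∈ N)
    (hqnorm : ∀ a : A, ‖q a‖ = Metric.infDist a N)
    (hqmod : IsModuleMap actA actQ q) :
    -- the three closed ideals `J_A ⊆ A`, `J_{A/N} ⊆ Q`, `J_N ⊆ N`:
    letI JA : Set A := closure ((Submodule.span ℂ
      {x | ∃ (α : 𝔄) (a a' : A), x = (actA.r a α) * a' - a * (actA.l α a')} : Set A))
    letI JQ : Set Q := closure ((Submodule.span ℂ
      {x | ∃ (α : 𝔄) (y y' : Q), x = (actQ.r y α) * y' - y * (actQ.l α y')} : Set Q))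
    letI JN : Set A := closure ((Submodule.span ℂ
      {x | ∃ (α : 𝔄), ∃ a ∈ N, ∃ a' ∈ N, x = (actA.r a α) * a' - a * (actA.l α a')} : Set A))
    -- (1) `q(J_A) ⊆ J_{A/N}`, so `q̃ : A/J_A → (A/N)/J_{A/N}` is well defined;
    (∀ a ∈ JA, q a ∈ JQ) ∧
    -- (2) `q̃` is surjective;
    (∀ y : Q, ∃ a : A, q a = y) ∧
    -- (3) `ι : N/J_N → A/J_A` is injective (i.e. `J_A ∩ N ⊆ J_N`);
    (∀ n ∈ N, n ∈ JA → n ∈ JN) ∧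
    -- (4) `ker q̃ = ι(N/J_N)`, giving `(A/J_A)/(N/J_N) ≅ (A/N)/J_{A/N}`:
    (∀ a : A, q a ∈ JQ ↔ a ∈ closure {x : A | ∃ n ∈ N, ∃ j ∈ JA, x = n + j}) :=
  quotient_J_ideals_general actA actQ N hideal_l hideal_r hzero q hqsurj hqker hqnorm hqmod
end
end

section
/- Let u = u_* be a self-adjoint map in D_𝔄(A,B). Then ‖u‖_{𝔄-dec} = inf{‖u₁ + u₂‖ : u₁, u₂ ∈ CP_𝔄(A,B), u = u₁ − u₂}. -/
open scoped TensorProduct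
noncomputable section

section Dec

variable {𝔄 A B : Type*}
  [NormedRing 𝔄] [StarRing 𝔄] [CStarRing 𝔄] [NormedAlgebra ℂ 𝔄] [StarModule ℂ 𝔄]
  [CompleteSpace 𝔄]
  [NormedRing A] [StarRing A] [CStarRing A] [NormedAlgebra ℂ A] [StarModule ℂ A]
  [CompleteSpace A]
  [NormedRing B] [StarRing B] [CStarRing B] [NormedAlgebra ℂ B] [StarModule ℂ B]
  [CompleteSpace B]

/-- The adjoint map `u_* (a) = u(a*)*`. -/
def adjMap (u : A → B) : A → B := fun a => star (u (star a))

/-- The `2×2` matrix map `V = [[S₁, u], [u_*, S₂]] : A → M₂(B)`. -/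
def Vmat (S₁ u S₂ : A → B) : A → Matrix (Fin 2) (Fin 2) B :=
  fun a => !![S₁ a, u a; adjMap u a, S₂ a]

/-- A completely positive `𝔄`-bimodule map. -/
def IsCPModuleMap (actA : CompatibleAction 𝔄 A) (actB : CompatibleAction 𝔄 B)
    (u : A → B) : Prop :=
  IsCP u ∧ IsModuleMap actA actB u

/-- The set of values `max{‖S₁‖, ‖S₂‖}` over all decompositions of `u` witnessing
membership in `D_𝔄(A,B)` (Haagerup). -/
def decSet (actA : CompatibleAction 𝔄 A) (actB : CompatibleAction 𝔄 B)
    (u : A →L[ℂ] B) : Set ℝ :=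
  {m | ∃ S₁ S₂ : A →L[ℂ] B, IsCPModuleMap actA actB S₁ ∧ IsCPModuleMap actA actB S₂ ∧
      IsCP (Vmat S₁ u S₂) ∧ m = max ‖S₁‖ ‖S₂‖}

/-- `u ∈ D_𝔄(A, B)`: `u` is `𝔄`-decomposable. -/
def IsDecomposable (actA : CompatibleAction 𝔄 A) (actB : CompatibleAction 𝔄 B)
    (u : A →L[ℂ] B) : Prop :=
  (decSet actA actB u).Nonempty

/-- The `𝔄`-decomposable norm `‖u‖_{𝔄-dec}`. -/
def decNorm (actA : CompatibleAction 𝔄 A) (actB : CompatibleAction 𝔄 B)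
    (u : A →L[ℂ] B) : ℝ :=
  sInf (decSet actA actB u)

end Dec


/-!
If `V = [[S₁, u], [u, S₂]]` is completely positive, compressing it by the vectors `(1, ±1)/2`
gives completely positive maps `u± = (S₁ + S₂)/4 ± u/2` with `u = u₊ - u₋` and
`‖u₊ + u₋‖ = ‖S₁ + S₂‖/2 ≤ max ‖S₁‖ ‖S₂‖`. They are `𝔄`-module maps because `u` is one: this is
a multiplicative-domain argument, complete positivity of `V` forcing its off-diagonal entry to
intertwine the action of `𝔄` as its diagonal entries do. Conversely, if `u = u₁ - u₂` with
`uᵢ ∈ CP_𝔄(A, B)`, then `S₁ = S₂ = u₁ + u₂` is admissible, since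
`[[u₁ + u₂, u₁ - u₂], [u₁ - u₂, u₁ + u₂]] = u₁ ⊗ [[1, 1], [1, 1]] + u₂ ⊗ [[1, -1], [-1, 1]]`.
So each value of one infimum is dominated by a value of the other.
-/

section StarPos

open Matrix

lemma Matrix.starPos_vecMulVec_star {R n : Type*} [NonUnitalSemiring R] [StarRing R]
    [Fintype n] [DecidableEq n] (x : n → R) : StarPos (vecMulVec (star x) x) := by
  cases isEmpty_or_nonempty n with
  | inl _ => exact ⟨0, Subsingleton.elim _ _⟩
  | inr h =>
    obtain ⟨i₀⟩ := h
    refine ⟨Matrix.of fun i j => if i = i₀ then x j else 0, ?_⟩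
    ext i j
    rw [Matrix.mul_apply, Finset.sum_eq_single i₀ (fun l _ hl => by simp [hl]) (by simp)]
    simp [vecMulVec_apply]

variable {C : Type*} [CStarAlgebra C]

lemma starPos_iff_nonneg [PartialOrder C] [StarOrderedRing C] {x : C} : StarPos x ↔ 0 ≤ x :=
  CStarAlgebra.nonneg_iff_eq_star_mul_self.symm

lemma StarPos.add {x y : C} (hx : StarPos x) (hy : StarPos y) : StarPos (x + y) := by
  let _ := CStarAlgebra.spectralOrder C
  have _ := CStarAlgebra.spectralOrderedRing C
  rw [starPos_iff_nonneg] at *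
  exact add_nonneg hx hy

lemma StarPos.sum {ι : Type*} (s : Finset ι) {x : ι → C} (hx : ∀ i ∈ s, StarPos (x i)) :
    StarPos (∑ i ∈ s, x i) :=
  Finset.sum_induction _ StarPos (fun _ _ => StarPos.add) ⟨0, by simp⟩ hx

lemma eq_zero_of_sum_star_mul_self_eq_zero {ι : Type*} {s : Finset ι} {x : ι → C}
    (h : ∑ t ∈ s, star (x t) * x t = 0) : ∀ t ∈ s, x t = 0 := by
  let _ := CStarAlgebra.spectralOrder C
  have _ := CStarAlgebra.spectralOrderedRing C
  intro t ht
  rw [← CStarRing.star_mul_self_eq_zero_iff]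
  exact (Finset.sum_eq_zero_iff_of_nonneg fun t _ => star_mul_self_nonneg (x t)).mp h t ht

variable {B n : Type*} [CStarAlgebra B] [Fintype n]

-- `CStarMatrix n n B` is a C⋆-algebra with the same `*` and `⋆` as `Matrix n n B`.
lemma Matrix.starPos_add [DecidableEq n] {M N : Matrix n n B} (hM : StarPos M)
    (hN : StarPos N) : StarPos (M + N) := by
  let _ := CStarAlgebra.spectralOrder B
  have _ := CStarAlgebra.spectralOrderedRing B
  exact StarPos.add (x := CStarMatrix.ofMatrix M) (y := CStarMatrix.ofMatrix N) hM hN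

lemma Matrix.starPos_sum_vecMulVec_star [DecidableEq n] {ι : Type*} [Fintype ι]
    (z : ι → n → B) : StarPos (∑ t, vecMulVec (star (z t)) (z t)) := by
  let _ := CStarAlgebra.spectralOrder B
  have _ := CStarAlgebra.spectralOrderedRing B
  exact StarPos.sum (x := fun t => CStarMatrix.ofMatrix (vecMulVec (star (z t)) (z t)))
    Finset.univ fun t _ => starPos_vecMulVec_star (z t)

lemma Matrix.eq_zero_of_diag_sum_star_mul_self_eq_zero {ι : Type*} [Fintype ι]
    {Z : ι → Matrix n n B} (h : ∀ p, (∑ l, star (Z l) * Z l) p p = 0) (l : ι) : Z l = 0 := by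
  ext r p
  have hp : ∑ t : ι × n, star (Z t.1 t.2 p) * Z t.1 t.2 p = 0 := by
    simpa [Fintype.sum_prod_type, Matrix.sum_apply, Matrix.mul_apply, Matrix.star_apply]
      using h p
  exact eq_zero_of_sum_star_mul_self_eq_zero hp (l, r) (Finset.mem_univ _)

end StarPos

section MatrixAlgebra

open Matrix

lemma Matrix.map_eq_star_mul_self_iff {A C : Type*} [NonUnitalRing C] [StarRing C] {k : ℕ}
    (V : A → C) (M : Matrix (Fin k) (Fin k) A) (Y : Matrix (Fin k) (Fin k) C) :
    M.map V = star Y * Y ↔ ∀ i j, V (M i j) = ∑ l, star (Y l i) * Y l j := by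
  simp only [← Matrix.ext_iff, Matrix.map_apply, Matrix.mul_apply, Matrix.star_apply]

lemma Matrix.star_dotProduct_star_mul_mulVec {R m : Type*} [Fintype m] [NonUnitalSemiring R]
    [StarRing R] (X Y : Matrix m m R) (w : m → R) :
    star w ⬝ᵥ ((star X * Y) *ᵥ w) = star (X *ᵥ w) ⬝ᵥ (Y *ᵥ w) := by
  rw [← Matrix.mulVec_mulVec, Matrix.dotProduct_mulVec, Matrix.star_mulVec,
    Matrix.star_eq_conjTranspose]

lemma Finset.sum_star_sub_mul_mul_sub {R ι : Type*} [Ring R] [StarRing R] (s : Finset ι)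
    (y z : ι → R) (F : R) :
    ∑ l ∈ s, star (y l - z l * F) * (y l - z l * F) =
      ∑ l ∈ s, star (y l) * y l - (∑ l ∈ s, star (y l) * z l) * F
        - star F * ∑ l ∈ s, star (z l) * y l + star F * (∑ l ∈ s, star (z l) * z l) * F := by
  simp only [Finset.sum_mul, Finset.mul_sum, ← Finset.sum_sub_distrib, ← Finset.sum_add_distrib]
  refine Finset.sum_congr rfl fun l _ => ?_
  simp only [star_sub, star_mul]
  noncomm_ring

end MatrixAlgebra

section CompletelyPositive

open Matrix

lemma IsCP.add_sub_block {A B : Type*} [NonUnitalRing A] [StarRing A] [NonUnitalRing B]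
    [StarRing B] {f g : A → B} (hf : IsCP f) (hg : IsCP g) :
    IsCP (fun a => !![f a + g a, f a - g a; f a - g a, f a + g a]) := by
  intro k M hM
  obtain ⟨Y₁, hY₁⟩ := hf k M hM
  obtain ⟨Y₂, hY₂⟩ := hg k M hM
  rw [map_eq_star_mul_self_iff] at hY₁ hY₂
  refine ⟨Matrix.of fun l j => !![Y₁ l j, Y₁ l j; Y₂ l j, -Y₂ l j],
    (map_eq_star_mul_self_iff _ _ _).mpr fun i j => ?_⟩
  ext p q
  fin_cases p <;> fin_cases q <;>
    simp [hY₁, hY₂, Matrix.sum_apply, Matrix.mul_apply, Matrix.star_apply, Fin.sum_univ_two,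
      Finset.sum_add_distrib, sub_eq_add_neg]

variable {A B : Type*} [CStarAlgebra B]

lemma IsCP.add [NonUnitalRing A] [StarRing A] {f g : A → B} (hf : IsCP f) (hg : IsCP g) :
    IsCP (f + g) :=
  fun k M hM => starPos_add (hf k M hM) (hg k M hM)

lemma IsCP.compress [NonUnitalRing A] [StarRing A] {m : Type*} [Fintype m]
    {V : A → Matrix m m B} (hV : IsCP V) (w : m → B) :
    IsCP (fun a => star w ⬝ᵥ (V a *ᵥ w)) := by
  intro k M hM
  obtain ⟨Y, hY⟩ := hV k M hM
  let z : Fin k × m → Fin k → B := fun t i => (Y t.1 i *ᵥ w) t.2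
  convert starPos_sum_vecMulVec_star z using 1
  ext i j
  rw [Matrix.map_apply, (map_eq_star_mul_self_iff _ _ _).mp hY, Matrix.sum_mulVec,
    dotProduct_sum, Matrix.sum_apply, Fintype.sum_prod_type]
  refine Finset.sum_congr rfl fun l _ => ?_
  rw [star_dotProduct_star_mul_mulVec]
  simp only [vecMulVec_apply, z, dotProduct, Pi.star_apply]

/- The Gram matrix of `(1, a f, a)` is positive; writing its image under `V` as `Y⋆ Y`, the
hypotheses kill the diagonal of `∑ₗ (Yₗ₁ - Yₗ₂ F)⋆ (Yₗ₁ - Yₗ₂ F)`, so `Yₗ₁ = Yₗ₂ F`. -/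
lemma IsCP.map_mul_eq_mul_diagonal [Ring A] [StarRing A] {n : Type*} [Fintype n]
    [DecidableEq n] {V : A → Matrix n n B} (hV : IsCP V) {f : A} {g : B}
    (hr : ∀ x p, V (x * f) p p = V x p p * g)
    (hl : ∀ x p, V (star f * x) p p = star g * V x p p) (a : A) :
    V (a * f) = V a * diagonal fun _ => g := by
  set F : Matrix n n B := diagonal fun _ => g
  set x : Fin 3 → A := ![1, a * f, a]
  obtain ⟨Y, hY⟩ := hV 3 _ (starPos_vecMulVec_star x)
  have hG : ∀ i j, V (star (x i) * x j) = ∑ l, star (Y l i) * Y l j := by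
    simpa [vecMulVec_apply] using (map_eq_star_mul_self_iff _ _ _).mp hY
  have hdefect : ∀ p, (∑ l, star (Y l 1 - Y l 2 * F) * (Y l 1 - Y l 2 * F)) p p = 0 := by
    intro p
    rw [Finset.sum_star_sub_mul_mul_sub, ← hG, ← hG, ← hG, ← hG]
    have hF : ∀ X : Matrix n n B, (X * F) p p = X p p * g := fun X => mul_diagonal _ _ _ _
    have hF' : ∀ X : Matrix n n B, (star F * X) p p = star g * X p p := fun X => by
      rw [star_eq_conjTranspose, diagonal_conjTranspose, diagonal_mul]; rfl
    have e₁ : star (a * f) * (a * f) = star f * (star a * a * f) := by simp [mul_assoc]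
    have e₂ : star (a * f) * a = star f * (star a * a) := by simp [mul_assoc]
    have e₃ : star a * (a * f) = star a * a * f := (mul_assoc _ _ _).symm
    rw [show x 1 = a * f from rfl, show x 2 = a from rfl, e₁, e₂, e₃, mul_assoc (star F)]
    simp only [Matrix.sub_apply, Matrix.add_apply, hF, hF', hl, hr]
    noncomm_ring
  have hcol : ∀ l, Y l 1 = Y l 2 * F := fun l =>
    sub_eq_zero.mp (eq_zero_of_diag_sum_star_mul_self_eq_zero hdefect l)
  calc V (a * f) = ∑ l, star (Y l 0) * Y l 1 := by simpa [x] using hG 0 1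
    _ = (∑ l, star (Y l 0) * Y l 2) * F := by simp only [hcol, Finset.sum_mul, mul_assoc]
    _ = V a * F := by simpa [x] using congrArg (· * F) (hG 0 2).symm

end CompletelyPositive
section ModuleMap

variable {𝔄 A B : Type*} [NonUnitalNormedRing 𝔄] [StarRing 𝔄] [NormedSpace ℂ 𝔄]

namespace CompatibleAction

variable [NormedRing A] [StarRing A] [NormedSpace ℂ A] (act : CompatibleAction 𝔄 A)

lemma l_eq_mul (α : 𝔄) (x : A) : act.l α x = act.l α 1 * x := by
  rw [← act.l_mul, one_mul]

lemma r_eq_mul (x : A) (α : 𝔄) : act.r x α = x * act.r 1 α := by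
  rw [← act.mul_r, mul_one]

lemma star_r_one (α : 𝔄) : star (act.r 1 α) = act.l (star α) 1 := by
  rw [act.star_r, star_one]

end CompatibleAction

namespace IsModuleMap

variable [NonUnitalNormedRing A] [StarRing A] [NormedSpace ℂ A]
  [NonUnitalNormedRing B] [StarRing B] [NormedSpace ℂ B]
  {actA : CompatibleAction 𝔄 A} {actB : CompatibleAction 𝔄 B} {f g : A → B}

lemma add (hf : IsModuleMap actA actB f) (hg : IsModuleMap actA actB g) :
    IsModuleMap actA actB (f + g) :=
  ⟨fun α a => by simp [hf.1, hg.1], fun a α => by simp [hf.2, hg.2]⟩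

lemma smul (c : ℂ) (hf : IsModuleMap actA actB f) : IsModuleMap actA actB (c • f) :=
  ⟨fun α a => by simp [hf.1], fun a α => by simp [hf.2]⟩

end IsModuleMap

variable [NormedRing A] [StarRing A] [NormedSpace ℂ A] [NormedRing B] [StarRing B]
  [NormedSpace ℂ B] {actA : CompatibleAction 𝔄 A} {actB : CompatibleAction 𝔄 B} {T : A → B}

lemma IsModuleMap.map_mul_r_one (hT : IsModuleMap actA actB T) (x : A) (α : 𝔄) :
    T (x * actA.r 1 α) = T x * actB.r 1 α := by
  rw [← actA.r_eq_mul, hT.2, actB.r_eq_mul]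

lemma IsModuleMap.map_star_r_one_mul (hT : IsModuleMap actA actB T) (x : A) (α : 𝔄) :
    T (star (actA.r 1 α) * x) = star (actB.r 1 α) * T x := by
  rw [actA.star_r_one, ← actA.l_eq_mul, hT.1, actB.star_r_one, actB.l_eq_mul]

end ModuleMap

lemma isModuleMap_of_isCP_Vmat {𝔄 A B : Type*} [NonUnitalNormedRing 𝔄] [StarRing 𝔄]
    [NormedSpace ℂ 𝔄] [CStarAlgebra A] [CStarAlgebra B]
    {actA : CompatibleAction 𝔄 A} {actB : CompatibleAction 𝔄 B} {S₁ S₂ u : A → B}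
    (hS₁ : IsModuleMap actA actB S₁) (hS₂ : IsModuleMap actA actB S₂)
    (hV : IsCP (Vmat S₁ u S₂)) (hsa : ∀ a, adjMap u a = u a) :
    IsModuleMap actA actB u := by
  have hr : ∀ a α, u (actA.r a α) = actB.r (u a) α := by
    intro a α
    have hmul := hV.map_mul_eq_mul_diagonal (f := actA.r 1 α) (g := actB.r 1 α)
      (fun x p => by fin_cases p <;> simp [Vmat, hS₁.map_mul_r_one, hS₂.map_mul_r_one])
      (fun x p => by
        fin_cases p <;> simp [Vmat, hS₁.map_star_r_one_mul, hS₂.map_star_r_one_mul]) a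
    rw [actA.r_eq_mul, actB.r_eq_mul]
    simpa [Vmat, Matrix.mul_diagonal] using congr_fun₂ hmul 0 1
  have hstar : ∀ a, u (star a) = star (u a) := fun a => by
    rw [← hsa (star a), adjMap, star_star]
  refine ⟨fun α a => ?_, hr⟩
  calc u (actA.l α a) = star (u (star (actA.l α a))) := by rw [← hstar, star_star]
    _ = actB.l α (u a) := by rw [actA.star_l, hr, hstar, actB.star_r, star_star, star_star]

section Decomposition

variable {𝔄 A B : Type*} [CStarAlgebra 𝔄] [CStarAlgebra A] [CStarAlgebra B]
  {actA : CompatibleAction 𝔄 A} {actB : CompatibleAction 𝔄 B} {u : A →L[ℂ] B}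

variable (actA actB u) in
def cpDecompSet : Set ℝ :=
  {c | ∃ u₁ u₂ : A →L[ℂ] B, IsCPModuleMap actA actB ⇑u₁ ∧ IsCPModuleMap actA actB ⇑u₂ ∧
    u = u₁ - u₂ ∧ c = ‖u₁ + u₂‖}

lemma cpDecompSet_subset_decSet (hsa : ∀ a, adjMap (⇑u) a = u a) :
    cpDecompSet actA actB u ⊆ decSet actA actB u := by
  rintro c ⟨u₁, u₂, h₁, h₂, rfl, rfl⟩
  have hS : IsCPModuleMap actA actB ⇑(u₁ + u₂) := ⟨h₁.1.add h₂.1, h₁.2.add h₂.2⟩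
  have hV : Vmat ⇑(u₁ + u₂) ⇑(u₁ - u₂) ⇑(u₁ + u₂) =
      fun a => !![u₁ a + u₂ a, u₁ a - u₂ a; u₁ a - u₂ a, u₁ a + u₂ a] := by
    funext a
    rw [Vmat, hsa a]
    simp
  exact ⟨u₁ + u₂, u₁ + u₂, hS, hS, hV ▸ h₁.1.add_sub_block h₂.1, (max_self _).symm⟩

lemma exists_mem_cpDecompSet_le (hsa : ∀ a, adjMap (⇑u) a = u a) {m : ℝ}
    (hm : m ∈ decSet actA actB u) : ∃ c ∈ cpDecompSet actA actB u, c ≤ m := by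
  obtain ⟨S₁, S₂, hS₁, hS₂, hV, rfl⟩ := hm
  have hu := isModuleMap_of_isCP_Vmat hS₁.2 hS₂.2 hV hsa
  let w (ε : ℂ) : A →L[ℂ] B := (4⁻¹ : ℂ) • (S₁ + S₂) + (ε / 2) • u
  have hw : ∀ ε : ℂ, ε = 1 ∨ ε = -1 → IsCPModuleMap actA actB ⇑(w ε) := by
    refine fun ε hε => ⟨?_, ((hS₁.2.add hS₂.2).smul _).add (hu.smul _)⟩
    convert hV.compress ![(2⁻¹ : ℂ) • 1, (ε / 2) • 1] using 1
    funext a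
    rcases hε with rfl | rfl <;>
    · simp [w, Vmat, hsa a, dotProduct, Matrix.mulVec, Fin.sum_univ_two]
      module
  have hsum : w 1 + w (-1) = (2⁻¹ : ℂ) • (S₁ + S₂) := by
    ext a; simp [w]; module
  refine ⟨‖w 1 + w (-1)‖, ⟨w 1, w (-1), hw 1 (.inl rfl), hw (-1) (.inr rfl), ?_, rfl⟩, ?_⟩
  · ext a; simp [w]; module
  calc ‖w 1 + w (-1)‖ = 2⁻¹ * ‖S₁ + S₂‖ := by rw [hsum, norm_smul]; norm_num
    _ ≤ 2⁻¹ * (‖S₁‖ + ‖S₂‖) := by gcongr; exact norm_add_le _ _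
    _ ≤ max ‖S₁‖ ‖S₂‖ := by linarith [le_max_left ‖S₁‖ ‖S₂‖, le_max_right ‖S₁‖ ‖S₂‖]

end Decomposition

abbrev CStarAlgebra.ofCStarRing (C : Type*) [NormedRing C] [StarRing C] [CStarRing C]
    [NormedAlgebra ℂ C] [StarModule ℂ C] [CompleteSpace C] : CStarAlgebra C :=
  { ‹NormedRing C›, ‹StarRing C›, ‹CompleteSpace C›, ‹CStarRing C›, ‹NormedAlgebra ℂ C›,
    ‹StarModule ℂ C› with }

theorem decNorm_selfAdjoint_general
    {𝔄 A B : Type*}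
    [NormedRing 𝔄] [StarRing 𝔄] [CStarRing 𝔄] [NormedAlgebra ℂ 𝔄] [StarModule ℂ 𝔄]
    [CompleteSpace 𝔄]
    [NormedRing A] [StarRing A] [CStarRing A] [NormedAlgebra ℂ A] [StarModule ℂ A]
    [CompleteSpace A]
    [NormedRing B] [StarRing B] [CStarRing B] [NormedAlgebra ℂ B] [StarModule ℂ B]
    [CompleteSpace B]
    (actA : CompatibleAction 𝔄 A) (actB : CompatibleAction 𝔄 B)
    (u : A →L[ℂ] B)
    (hsa : ∀ a : A, adjMap (⇑u) a = u a) :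
    decNorm actA actB u
      = sInf {c : ℝ | ∃ u₁ u₂ : A →L[ℂ] B,
          IsCPModuleMap actA actB (⇑u₁) ∧ IsCPModuleMap actA actB (⇑u₂) ∧
          u = u₁ - u₂ ∧ c = ‖u₁ + u₂‖} := by
  let _ := CStarAlgebra.ofCStarRing 𝔄
  let _ := CStarAlgebra.ofCStarRing A
  let _ := CStarAlgebra.ofCStarRing B
  exact csInf_eq_csInf_of_forall_exists_le (fun m hm => exists_mem_cpDecompSet_le hsa hm)
    fun c hc => ⟨c, cpDecompSet_subset_decSet hsa hc, le_rfl⟩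

/-- For a self-adjoint `u = u_*` in `D_𝔄(A,B)`,
`‖u‖_{𝔄-dec} = inf{‖u₁ + u₂‖ : u₁, u₂ ∈ CP_𝔄(A,B), u = u₁ − u₂}`. -/
theorem decNorm_selfAdjoint
    {𝔄 A B : Type*}
    [NormedRing 𝔄] [StarRing 𝔄] [CStarRing 𝔄] [NormedAlgebra ℂ 𝔄] [StarModule ℂ 𝔄]
    [CompleteSpace 𝔄]
    [NormedRing A] [StarRing A] [CStarRing A] [NormedAlgebra ℂ A] [StarModule ℂ A]
    [CompleteSpace A]
    [NormedRing B] [StarRing B] [CStarRing B] [NormedAlgebra ℂ B] [StarModule ℂ B]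
    [CompleteSpace B]
    (actA : CompatibleAction 𝔄 A) (actB : CompatibleAction 𝔄 B)
    (u : A →L[ℂ] B)
    (hdec : IsDecomposable actA actB u)
    (hsa : ∀ a : A, adjMap (⇑u) a = u a) :
    decNorm actA actB u
      = sInf {c : ℝ | ∃ u₁ u₂ : A →L[ℂ] B,
          IsCPModuleMap actA actB (⇑u₁) ∧ IsCPModuleMap actA actB (⇑u₂) ∧
          u = u₁ - u₂ ∧ c = ‖u₁ + u₂‖} :=
  decNorm_selfAdjoint_general actA actB u hsa
end
end
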